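/- arXiv:1004.0429 — 6 statements merged into one kernel-verified Lean document; each statement's English description precedes it below -/
import Mathlib

section
/- Let A^1, ..., A^p be symmetric real p×p matrices and define θ(x) = Σ_{k=1}^p A^k x_k. If xᵀ θ(x) = 0 for all x ∈ ℝ^p, then A^k = 0 for all k (hence θ ≡ 0). -/
open Matrix

/-
Write `T k i j = (A k) i j`. Testing `xᵀ θ(x) = 0` coordinatewise says that for each `j` the
quadratic form with matrix `(i, k) ↦ T k i j` vanishes, so by polarization `T` is antisymmetric in
its first two indices; the `Aᵏ` being symmetric makes `T` symmetric in its last two. Alternating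
the two symmetries around the three indices gives `T k i j = -T k i j`, hence `T = 0`.
-/

namespace Matrix

variable {ι R : Type*} [Fintype ι] [CommRing R]

theorem apply_eq_neg_apply_of_dotProduct_mulVec_self_eq_zero [DecidableEq ι]
    {M : Matrix ι ι R} (hM : ∀ x, x ⬝ᵥ M *ᵥ x = 0) (i k : ι) : M i k = -M k i := by
  have hAlt : (toBilin' M).IsAlt := fun x => by rw [toBilin'_apply', hM]
  rw [← toBilin'_single M i k, ← toBilin'_single M k i]
  exact (hAlt.neg_eq _ _).symm

theorem vecMul_sum_smul_apply (A : ι → Matrix ι ι R) (x : ι → R) (j : ι) :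
    vecMul x (∑ k, x k • A k) j = x ⬝ᵥ (of fun i k => A k i j) *ᵥ x := by
  simp only [vecMul, mulVec, dotProduct, sum_apply, smul_apply, smul_eq_mul, of_apply,
    Finset.mul_sum]
  exact Finset.sum_congr rfl fun _ _ => Finset.sum_congr rfl fun _ _ => by ring

end Matrix

theorem eq_zero_of_antisymm_left_of_symm_right {ι R : Type*} [Ring R] [NoZeroDivisors R]
    [CharZero R] {T : ι → ι → ι → R} (hanti : ∀ k i j, T k i j = -T i k j)
    (hsymm : ∀ k i j, T k i j = T k j i) (k i j : ι) : T k i j = 0 := by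
  rw [← CharZero.eq_neg_self_iff]
  calc T k i j = -T i k j := hanti k i j
    _ = -T i j k := by rw [hsymm i k j]
    _ = T j i k := by rw [hanti i j k, neg_neg]
    _ = T j k i := hsymm j i k
    _ = -T k j i := hanti j k i
    _ = -T k i j := by rw [hsymm k j i]

/-- If `A¹,…,Aᵖ` are symmetric real `p×p` matrices and `θ(x) = ∑ₖ Aᵏ xₖ` satisfies
`xᵀ θ(x) = 0` for all `x`, then all `Aᵏ` vanish. -/
theorem stmt0 (p : ℕ) (A : Fin p → Matrix (Fin p) (Fin p) ℝ)
    (hsymm : ∀ k, (A k).IsSymm)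
    (h : ∀ x : Fin p → ℝ, Matrix.vecMul x (∑ k, x k • A k) = 0) :
    ∀ k, A k = 0 := by
  have hanti : ∀ k i j, A k i j = -A i k j := fun k i j =>
    apply_eq_neg_apply_of_dotProduct_mulVec_self_eq_zero (M := of fun i k => A k i j)
      (fun x => by rw [← vecMul_sum_smul_apply, h x, Pi.zero_apply]) i k
  intro k
  ext i j
  exact eq_zero_of_antisymm_left_of_symm_right hanti (fun k i j => (hsymm k).apply j i) k i j
end

section
/- Let u : ℝ^p → ℝ^q be affine, u(x) = γx + δ, let X = ∩_{i=1}^q {x : u_i(x) ≥ 0} be nonempty, and let d : ℝ^p → ℝ, d(x) = ax + b be affine. If d(x) ≥ 0 for all x ∈ X, then there exist c ≥ 0 and λ ∈ ℝ^q with λ_i ≥ 0 for all i such that d(x) = Σ_i λ_i u_i(x) + c for all x ∈ ℝ^p. -/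
/-!
Homogenize. Since `X` is nonempty, `d ≥ 0` on `X` forces `a x + b t ≥ 0` on the cone
`{(x, t) | t ≥ 0, γᵢ x + δᵢ t ≥ 0}`: for `t > 0` rescale to `t = 1`, and for `t = 0` the vector `x`
is a recession direction of `X`, along which `d` cannot decrease without becoming negative.
The linear Farkas lemma for this cone yields the `λᵢ`, and `c` is the multiplier of `t ≥ 0`.

The linear Farkas lemma is proved by induction on the number of inequalities, without topology.
If the last inequality `h ≥ 0` is superfluous we are done. Otherwise some `x₀`
satisfies the others with `g x₀ < 0`, hence `h x₀ < 0`; composing every functional with the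
projection onto `ker h` along `x₀` removes `h`, and the induction hypothesis represents `g` up to
a multiple of `h`, whose coefficient is positive because of the signs at `x₀`.
-/

open Matrix

lemma Finset.sum_insert_update_smul {ι R M : Type*} [Semiring R] [AddCommMonoid M] [Module R M]
    [DecidableEq ι] {s : Finset ι} {j : ι} (hj : j ∉ s) (l : ι → R) (c : R) (f : ι → M) :
    ∑ i ∈ insert j s, Function.update l j c i • f i = c • f j + ∑ i ∈ s, l i • f i := by
  rw [Finset.sum_insert hj, Function.update_self]
  congr 1
  exact Finset.sum_congr rfl fun i hi => by rw [Function.update_of_ne (ne_of_mem_of_not_mem hi hj)]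

namespace Module.Dual

variable {𝕜 V ι : Type*} [Field 𝕜] [AddCommGroup V] [Module 𝕜 V]

def projKerAlong (h : Module.Dual 𝕜 V) (x₀ : V) : V →ₗ[𝕜] V :=
  LinearMap.id - (h x₀)⁻¹ • h.smulRight x₀

lemma projKerAlong_apply (h : Module.Dual 𝕜 V) (x₀ x : V) :
    h.projKerAlong x₀ x = x - (h x₀)⁻¹ • h x • x₀ := rfl

lemma apply_projKerAlong {h : Module.Dual 𝕜 V} {x₀ : V} (hx₀ : h x₀ ≠ 0) (x : V) :
    h (h.projKerAlong x₀ x) = 0 := by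
  simp only [projKerAlong_apply, map_sub, map_smul, smul_eq_mul]
  field_simp
  ring

lemma eq_smul_of_dualMap_projKerAlong_eq_zero {h φ : Module.Dual 𝕜 V} {x₀ : V}
    (hφ : (h.projKerAlong x₀).dualMap φ = 0) : φ = (φ x₀ / h x₀) • h := by
  ext x
  have := LinearMap.congr_fun hφ x
  simp only [LinearMap.dualMap_apply, projKerAlong_apply, map_sub, map_smul, smul_eq_mul,
    LinearMap.zero_apply, sub_eq_zero] at this
  rw [LinearMap.smul_apply, smul_eq_mul, this]
  ring

def homogenize (f : Module.Dual 𝕜 V) (δ : 𝕜) : Module.Dual 𝕜 (V × 𝕜) :=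
  f.coprod (δ • LinearMap.id)

@[simp]
lemma homogenize_apply (f : Module.Dual 𝕜 V) (δ : 𝕜) (x : V) (t : 𝕜) :
    f.homogenize δ (x, t) = f x + δ * t := rfl

variable [LinearOrder 𝕜] [IsStrictOrderedRing 𝕜]

theorem exists_nonneg_eq_sum_smul_of_forall_nonneg (s : Finset ι) (f : ι → Module.Dual 𝕜 V)
    (g : Module.Dual 𝕜 V) (hg : ∀ x, (∀ i ∈ s, 0 ≤ f i x) → 0 ≤ g x) :
    ∃ l : ι → 𝕜, (∀ i, 0 ≤ l i) ∧ g = ∑ i ∈ s, l i • f i := by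
  classical
  induction s using Finset.induction_on generalizing f g with
  | empty =>
    refine ⟨0, fun _ => le_rfl, ?_⟩
    ext x
    have h₁ := hg x (by simp)
    have h₂ := hg (-x) (by simp)
    simp only [map_neg, Left.nonneg_neg_iff] at h₂
    simpa using le_antisymm h₂ h₁
  | @insert j s hj ih =>
    by_cases hs : ∀ x, (∀ i ∈ s, 0 ≤ f i x) → 0 ≤ g x
    · obtain ⟨l, hl, rfl⟩ := ih f g hs
      refine ⟨Function.update l j 0, fun i => ?_, ?_⟩
      · rw [Function.update_apply]
        exact ite_nonneg le_rfl (hl i)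
      · rw [Finset.sum_insert_update_smul hj, zero_smul, zero_add]
    push Not at hs
    obtain ⟨x₀, hfx₀, hgx₀⟩ := hs
    have hjx₀ : f j x₀ < 0 := by
      by_contra! H
      exact hgx₀.not_ge (hg x₀ (by simpa [Finset.forall_mem_insert, H] using hfx₀))
    set π := (f j).projKerAlong x₀
    obtain ⟨μ, hμ, hgμ⟩ := ih (fun i => π.dualMap (f i)) (π.dualMap g) fun x hx =>
      hg (π x) (Finset.forall_mem_insert .. |>.2 ⟨(apply_projKerAlong hjx₀.ne x).ge, hx⟩)
    set ψ := g - ∑ i ∈ s, μ i • f i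
    have hψ : ψ = (ψ x₀ / f j x₀) • f j := by
      refine eq_smul_of_dualMap_projKerAlong_eq_zero ?_
      simpa only [ψ, map_sub, map_sum, map_smul, sub_eq_zero] using hgμ
    have hψx₀ : ψ x₀ < 0 := by
      have : 0 ≤ ∑ i ∈ s, μ i * f i x₀ :=
        Finset.sum_nonneg fun i hi => mul_nonneg (hμ i) (hfx₀ i hi)
      simp only [ψ, LinearMap.sub_apply, LinearMap.sum_apply, LinearMap.smul_apply, smul_eq_mul]
      linarith
    refine ⟨Function.update μ j (ψ x₀ / f j x₀), fun i => ?_, ?_⟩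
    · rw [Function.update_apply]
      exact ite_nonneg (div_nonneg_of_nonpos hψx₀.le hjx₀.le) (hμ i)
    · rw [Finset.sum_insert_update_smul hj, ← hψ]
      simp [ψ]

variable {f : ι → Module.Dual 𝕜 V} {δ : ι → 𝕜} {g : Module.Dual 𝕜 V} {b : 𝕜}

lemma apply_nonneg_of_forall_apply_nonneg (hX : ∃ x₀, ∀ i, 0 ≤ f i x₀ + δ i)
    (hd : ∀ x, (∀ i, 0 ≤ f i x + δ i) → 0 ≤ g x + b) {y : V} (hy : ∀ i, 0 ≤ f i y) :
    0 ≤ g y := by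
  obtain ⟨x₀, hx₀⟩ := hX
  by_contra! hgy
  obtain ⟨s, hs, hgs⟩ : ∃ s : 𝕜, 0 ≤ s ∧ s * g y = -(g x₀ + b + 1) :=
    ⟨(g x₀ + b + 1) / -g y, div_nonneg (by linarith [hd x₀ hx₀]) (by linarith),
      by rw [div_neg, neg_mul, div_mul_cancel₀ _ hgy.ne]⟩
  have := hd (x₀ + s • y) fun i => by
    simp only [map_add, map_smul, smul_eq_mul]
    linarith [hx₀ i, mul_nonneg hs (hy i)]
  simp only [map_add, map_smul, smul_eq_mul] at this
  linarith

lemma homogenize_nonneg_of_forall_homogenize_nonneg (hX : ∃ x₀, ∀ i, 0 ≤ f i x₀ + δ i)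
    (hd : ∀ x, (∀ i, 0 ≤ f i x + δ i) → 0 ≤ g x + b) {x : V} {t : 𝕜} (ht : 0 ≤ t)
    (hxt : ∀ i, 0 ≤ (f i).homogenize (δ i) (x, t)) : 0 ≤ g.homogenize b (x, t) := by
  simp only [homogenize_apply] at hxt ⊢
  rcases ht.eq_or_lt with rfl | ht
  · simpa using apply_nonneg_of_forall_apply_nonneg hX hd (y := x) (by simpa using hxt)
  have hscale (φ : Module.Dual 𝕜 V) (β : 𝕜) : φ x + β * t = t * (φ (t⁻¹ • x) + β) := by
    rw [map_smul, smul_eq_mul, mul_add, mul_inv_cancel_left₀ ht.ne']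
    ring
  rw [hscale, mul_nonneg_iff_of_pos_left ht]
  refine hd _ fun i => ?_
  rw [← mul_nonneg_iff_of_pos_left ht, ← hscale]
  exact hxt i

theorem exists_nonneg_eq_sum_smul_of_forall_add_nonneg [Fintype ι]
    (hX : ∃ x₀, ∀ i, 0 ≤ f i x₀ + δ i) (hd : ∀ x, (∀ i, 0 ≤ f i x + δ i) → 0 ≤ g x + b) :
    ∃ (c : 𝕜) (l : ι → 𝕜), 0 ≤ c ∧ (∀ i, 0 ≤ l i) ∧
      g = ∑ i, l i • f i ∧ b = ∑ i, l i * δ i + c := by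
  obtain ⟨l, hl, hgl⟩ := exists_nonneg_eq_sum_smul_of_forall_nonneg Finset.univ
    (fun o : Option ι => o.elim (LinearMap.snd 𝕜 V 𝕜) fun i => (f i).homogenize (δ i))
    (g.homogenize b) fun ⟨x, t⟩ h =>
      homogenize_nonneg_of_forall_homogenize_nonneg hX hd (h none (Finset.mem_univ _))
        fun i => h (some i) (Finset.mem_univ _)
  simp only [Fintype.sum_option] at hgl
  refine ⟨l none, fun i => l (some i), hl none, fun i => hl (some i), ?_, ?_⟩
  · ext x
    simpa using LinearMap.congr_fun hgl (x, 0)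
  · simpa [add_comm] using LinearMap.congr_fun hgl (0, 1)

end Module.Dual

/-- Affine Farkas lemma: if the affine function `d(x) = a·x + b` is nonnegative on the
nonempty polyhedron `X = ∩ᵢ {x : uᵢ(x) = γᵢ·x + δᵢ ≥ 0}`, then `d = ∑ᵢ λᵢ uᵢ + c` for
some `λᵢ ≥ 0` and `c ≥ 0`. -/
theorem stmt1 (p q : ℕ) (γ : Fin q → Fin p → ℝ) (δ : Fin q → ℝ)
    (a : Fin p → ℝ) (b : ℝ)
    (hne : ∃ x : Fin p → ℝ, ∀ i, 0 ≤ γ i ⬝ᵥ x + δ i)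
    (hd : ∀ x : Fin p → ℝ, (∀ i, 0 ≤ γ i ⬝ᵥ x + δ i) → 0 ≤ a ⬝ᵥ x + b) :
    ∃ (c : ℝ) (l : Fin q → ℝ), 0 ≤ c ∧ (∀ i, 0 ≤ l i) ∧
      ∀ x : Fin p → ℝ, a ⬝ᵥ x + b = ∑ i, l i * (γ i ⬝ᵥ x + δ i) + c := by
  obtain ⟨c, l, hc, hl, ha, hb⟩ :=
    Module.Dual.exists_nonneg_eq_sum_smul_of_forall_add_nonneg
      (f := fun i => dotProductBilin ℝ ℝ (γ i)) (g := dotProductBilin ℝ ℝ a) hne hd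
  refine ⟨c, l, hc, hl, fun x => ?_⟩
  have hax := LinearMap.congr_fun ha x
  simp only [dotProductBilin_apply_apply, LinearMap.sum_apply, LinearMap.smul_apply,
    smul_eq_mul] at hax
  rw [hax, hb, ← add_assoc, ← Finset.sum_add_distrib]
  simp only [mul_add]
end

section
/- Let X = ∩_{j=1}^q {u_j ≥ 0} be a nonempty convex polyhedron with minimal index set Q, let i ∈ Q, and let v be an affine function with ∂X_i = X ∩ {u_i = 0} ⊂ {v = 0}. Then there exists λ ∈ ℝ such that v(x) = λ u_i(x) for all x ∈ X; if moreover X has nonempty interior, then v(x) = λ u_i(x) for all x ∈ ℝ^p. -/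
open Matrix

/-- Let `X = ∩ⱼ {uⱼ ≥ 0}` be a nonempty polyhedron with minimal description and let `v`
be an affine function vanishing on the boundary segment `∂Xᵢ`. Then `v = λ uᵢ` on `X` for
some `λ ∈ ℝ`; if moreover `X` has nonempty interior, then `v = λ uᵢ` on all of `ℝᵖ`. -/
theorem stmt4 (p q : ℕ) (γ : Fin q → Fin p → ℝ) (δ : Fin q → ℝ) (i : Fin q)
    (a : Fin p → ℝ) (b : ℝ)
    (hne : ∃ x : Fin p → ℝ, ∀ j, 0 ≤ γ j ⬝ᵥ x + δ j)
    (hmin : ∀ Q' : Finset (Fin q), Q' ≠ Finset.univ →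
      {x : Fin p → ℝ | ∀ j ∈ Q', 0 ≤ γ j ⬝ᵥ x + δ j} ≠
        {x : Fin p → ℝ | ∀ j, 0 ≤ γ j ⬝ᵥ x + δ j})
    (hv : ∀ x : Fin p → ℝ, (∀ j, 0 ≤ γ j ⬝ᵥ x + δ j) → γ i ⬝ᵥ x + δ i = 0 →
      a ⬝ᵥ x + b = 0) :
    ∃ l : ℝ,
      (∀ x : Fin p → ℝ, (∀ j, 0 ≤ γ j ⬝ᵥ x + δ j) →
        a ⬝ᵥ x + b = l * (γ i ⬝ᵥ x + δ i)) ∧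
      ((interior {x : Fin p → ℝ | ∀ j, 0 ≤ γ j ⬝ᵥ x + δ j}).Nonempty →
        ∀ x : Fin p → ℝ, a ⬝ᵥ x + b = l * (γ i ⬝ᵥ x + δ i)) := by
  classical
  -- Step 1: by minimality, find x₀ with all constraints except i, and u_i(x₀) < 0.
  have hQ' : (Finset.univ.erase i) ≠ Finset.univ := by
    intro h
    have := Finset.mem_univ i
    rw [← h] at this
    exact (Finset.notMem_erase i _) this
  have hne2 := hmin _ hQ'
  have hsub : {x : Fin p → ℝ | ∀ j, 0 ≤ γ j ⬝ᵥ x + δ j} ⊆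
      {x : Fin p → ℝ | ∀ j ∈ Finset.univ.erase i, 0 ≤ γ j ⬝ᵥ x + δ j} :=
    fun x hx j _ => hx j
  obtain ⟨x₀, hx₀Q, hx₀⟩ : ∃ x₀, (∀ j ∈ Finset.univ.erase i, 0 ≤ γ j ⬝ᵥ x₀ + δ j) ∧
      ¬ (∀ j, 0 ≤ γ j ⬝ᵥ x₀ + δ j) := by
    by_contra h
    push_neg at h
    exact hne2 (Set.Subset.antisymm (fun x hx => h x hx) hsub)
  have hx₀i : γ i ⬝ᵥ x₀ + δ i < 0 := by
    push_neg at hx₀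
    obtain ⟨j, hj⟩ := hx₀
    have hji : j = i := by
      by_contra hji
      exact absurd (hx₀Q j (Finset.mem_erase.mpr ⟨hji, Finset.mem_univ j⟩)) (not_le.mpr hj)
    rwa [hji] at hj
  have hx₀Q' : ∀ j, j ≠ i → 0 ≤ γ j ⬝ᵥ x₀ + δ j := fun j hj =>
    hx₀Q j (Finset.mem_erase.mpr ⟨hj, Finset.mem_univ j⟩)
  set s₀ : ℝ := γ i ⬝ᵥ x₀ + δ i with hs₀
  set l : ℝ := (a ⬝ᵥ x₀ + b) / s₀ with hl
  -- Step 2: v = l * u_i on X.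
  have main : ∀ x : Fin p → ℝ, (∀ j, 0 ≤ γ j ⬝ᵥ x + δ j) →
      a ⬝ᵥ x + b = l * (γ i ⬝ᵥ x + δ i) := by
    intro x hx
    set s : ℝ := γ i ⬝ᵥ x + δ i with hs
    have hsnn : 0 ≤ s := hx i
    have hden : s₀ - s < 0 := by linarith
    set t : ℝ := s₀ / (s₀ - s) with ht
    have ht0 : 0 < t := div_pos_of_neg_of_neg hx₀i hden
    have htden : t * (s₀ - s) = s₀ := div_mul_cancel₀ _ hden.ne
    have ht1 : t ≤ 1 := by nlinarith
    have hdot : ∀ c : Fin p → ℝ, c ⬝ᵥ (t • x + (1 - t) • x₀) =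
        t * (c ⬝ᵥ x) + (1 - t) * (c ⬝ᵥ x₀) := by
      intro c
      simp [dotProduct_add, dotProduct_smul, smul_eq_mul]
    have hzi : γ i ⬝ᵥ (t • x + (1 - t) • x₀) + δ i = 0 := by
      rw [hdot]
      have : t * (γ i ⬝ᵥ x) + (1 - t) * (γ i ⬝ᵥ x₀) + δ i
          = t * s + (1 - t) * s₀ := by rw [hs, hs₀]; ring
      rw [this]
      nlinarith [htden]
    have hzX : ∀ j, 0 ≤ γ j ⬝ᵥ (t • x + (1 - t) • x₀) + δ j := by
      intro j
      by_cases hji : j = i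
      · rw [hji, hzi]
      · rw [hdot]
        have h1 := hx j
        have h2 := hx₀Q' j hji
        nlinarith
    have hz := hv _ hzX hzi
    rw [hdot] at hz
    -- hz : t * (a ⬝ᵥ x) + (1 - t) * (a ⬝ᵥ x₀) + b = 0
    rw [hl, div_mul_eq_mul_div, eq_div_iff hx₀i.ne]
    linear_combination (s₀ - s) * hz + (a ⬝ᵥ x₀ - a ⬝ᵥ x) * htden
  refine ⟨l, main, ?_⟩
  -- Step 3: interior nonempty → identity everywhere.
  rintro ⟨y, hy⟩
  obtain ⟨ε, hε, hball⟩ := Metric.mem_nhds_iff.mp (mem_interior_iff_mem_nhds.mp hy)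
  set c : Fin p → ℝ := fun j => a j - l * γ i j with hc
  have hcd : ∀ w : Fin p → ℝ, c ⬝ᵥ w = a ⬝ᵥ w - l * (γ i ⬝ᵥ w) := by
    intro w
    simp [hc, dotProduct, sub_mul, mul_assoc, Finset.sum_sub_distrib, Finset.mul_sum]
  have hzero : ∀ w : Fin p → ℝ, w ∈ Metric.ball y ε → c ⬝ᵥ w + (b - l * δ i) = 0 := by
    intro w hw
    have := main w (hball hw)
    rw [hcd]
    linarith [this]
  have hcj : ∀ j : Fin p, c j = 0 := by
    intro j
    have hmem : y + (ε / 2) • (Pi.single j (1:ℝ) : Fin p → ℝ) ∈ Metric.ball y ε := by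
      rw [Metric.mem_ball, dist_eq_norm]
      have : y + (ε / 2) • (Pi.single j (1:ℝ) : Fin p → ℝ) - y
          = (ε / 2) • (Pi.single j (1:ℝ) : Fin p → ℝ) := by ring_nf
      rw [this]
      simp only [norm_smul, Pi.norm_single, norm_one, mul_one, Real.norm_eq_abs]
      rw [abs_of_pos (by linarith : (0:ℝ) < ε / 2)]
      linarith
    have h1 := hzero _ hmem
    have h2 := hzero y (Metric.mem_ball_self hε)
    rw [dotProduct_add, dotProduct_smul, dotProduct_single] at h1
    simp only [smul_eq_mul, mul_one] at h1
    have hkey : (ε / 2) * c j = 0 := by linarith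
    have hε2 : (ε / 2) ≠ 0 := by positivity
    exact (mul_eq_zero.mp hkey).resolve_left hε2
  have hczero : ∀ w : Fin p → ℝ, c ⬝ᵥ w = 0 := by
    intro w
    simp [dotProduct, hcj]
  have hbδ : b - l * δ i = 0 := by
    have := hzero y (Metric.mem_ball_self hε)
    rw [hczero] at this
    linarith
  intro x
  have := hcd x
  rw [hczero] at this
  have : a ⬝ᵥ x = l * (γ i ⬝ᵥ x) := by linarith
  rw [this]
  linarith [hbδ]
end

section
/- Let q > 1 and consider the space L of affine maps a : ℝ^p → ℝ^q such that (1, −2yᵀ) a(x) = 0 for all x = (x_1, y, z) ∈ ℝ^1 × ℝ^{q-1} × ℝ^{p-q} with x_1 = yᵀy. Then L is a linear space of dimension q + (q−1)(q−2)/2, and a basis is given by the columns of ζ(x) = [[4x_1, 2yᵀ],[2y, Id]] together with the columns (0, T_{ij}(y)) for 1 ≤ i < j < q. -/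
open Matrix

/- Affine maps `a : ℝᵖ → ℝ^q` are represented as pairs `(M, v)` with `a(x) = M x + v`.
Here the domain coordinates are indexed by `Unit ⊕ (Fin n ⊕ Fin m)` (corresponding to
`x = (x₁, y, z)` with `p = 1 + n + m`) and the codomain by `Unit ⊕ Fin n` (so `q = n + 1`). -/

/-- The space `L` of affine maps `a` with `(1, -2yᵀ) a(x) = 0` whenever `x₁ = yᵀy`. -/
def Lset (n m : ℕ) :
    Set (Matrix (Unit ⊕ Fin n) (Unit ⊕ (Fin n ⊕ Fin m)) ℝ × ((Unit ⊕ Fin n) → ℝ)) :=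
  {a | ∀ x : Unit ⊕ (Fin n ⊕ Fin m) → ℝ,
     x (Sum.inl ()) = ∑ j, (x (Sum.inr (Sum.inl j))) ^ 2 →
     (a.1.mulVec x + a.2) (Sum.inl ()) -
       2 * ∑ j, x (Sum.inr (Sum.inl j)) * (a.1.mulVec x + a.2) (Sum.inr j) = 0}

/-- The claimed basis family: the columns of `ζ(x) = [[4x₁, 2yᵀ],[2y, Id]]` (as affine
maps of `x`), together with the maps `x ↦ (0, T_{ij}(y))` for `i < j`. -/
noncomputable def famL (n m : ℕ) :
    ((Unit ⊕ Fin n) ⊕ {ij : Fin n × Fin n // ij.1 < ij.2}) →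
      Matrix (Unit ⊕ Fin n) (Unit ⊕ (Fin n ⊕ Fin m)) ℝ × ((Unit ⊕ Fin n) → ℝ)
  | Sum.inl (Sum.inl _) =>
      (Matrix.of fun r c =>
        match r, c with
        | Sum.inl _, Sum.inl _ => 4
        | Sum.inr j, Sum.inr (Sum.inl k) => if j = k then 2 else 0
        | _, _ => 0,
       0)
  | Sum.inl (Sum.inr k) =>
      (Matrix.of fun r c =>
        match r, c with
        | Sum.inl _, Sum.inr (Sum.inl j) => if j = k then 2 else 0
        | _, _ => 0,
       Sum.elim (fun _ => 0) fun j => if j = k then 1 else 0)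
  | Sum.inr c =>
      (Matrix.of fun r cc =>
        match r, cc with
        | Sum.inr kk, Sum.inr (Sum.inl l) =>
            if kk = c.1.1 ∧ l = c.1.2 then 1
            else if kk = c.1.2 ∧ l = c.1.1 then -1 else 0
        | _, _ => 0,
       0)

abbrev Pr (n m : ℕ) := Matrix (Unit ⊕ Fin n) (Unit ⊕ (Fin n ⊕ Fin m)) ℝ × ((Unit ⊕ Fin n) → ℝ)

def xv {n m : ℕ} (y : Fin n → ℝ) (z : Fin m → ℝ) : Unit ⊕ (Fin n ⊕ Fin m) → ℝ :=
  Sum.elim (fun _ => ∑ j, (y j)^2) (Sum.elim y z)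

lemma xv_cond {n m : ℕ} (y : Fin n → ℝ) (z : Fin m → ℝ) :
    xv (m := m) y z (Sum.inl ()) = ∑ j, (xv (m := m) y z (Sum.inr (Sum.inl j))) ^ 2 := by
  simp [xv]

lemma row0 {n m : ℕ} (a : Pr n m) (y : Fin n → ℝ) (z : Fin m → ℝ) :
    (a.1.mulVec (xv y z) + a.2) (Sum.inl ()) =
    a.1 (Sum.inl ()) (Sum.inl ()) * (∑ j, (y j)^2)
      + (∑ j, a.1 (Sum.inl ()) (Sum.inr (Sum.inl j)) * y j)
      + (∑ k, a.1 (Sum.inl ()) (Sum.inr (Sum.inr k)) * z k)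
      + a.2 (Sum.inl ()) := by
  simp [xv, mulVec, dotProduct, Fintype.sum_sum_type]
  ring

lemma rowj {n m : ℕ} (a : Pr n m) (y : Fin n → ℝ) (z : Fin m → ℝ) (j : Fin n) :
    (a.1.mulVec (xv y z) + a.2) (Sum.inr j) =
    a.1 (Sum.inr j) (Sum.inl ()) * (∑ l, (y l)^2)
      + (∑ l, a.1 (Sum.inr j) (Sum.inr (Sum.inl l)) * y l)
      + (∑ k, a.1 (Sum.inr j) (Sum.inr (Sum.inr k)) * z k)
      + a.2 (Sum.inr j) := by
  simp [xv, mulVec, dotProduct, Fintype.sum_sum_type]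
  ring

lemma key {n m : ℕ} (a : Pr n m) (H : a ∈ Lset n m) (y : Fin n → ℝ) (z : Fin m → ℝ) :
    a.1 (Sum.inl ()) (Sum.inl ()) * (∑ j, (y j)^2)
      + (∑ j, a.1 (Sum.inl ()) (Sum.inr (Sum.inl j)) * y j)
      + (∑ k, a.1 (Sum.inl ()) (Sum.inr (Sum.inr k)) * z k)
      + a.2 (Sum.inl ())
      - 2 * ∑ j, y j * (a.1 (Sum.inr j) (Sum.inl ()) * (∑ l, (y l)^2)
          + (∑ l, a.1 (Sum.inr j) (Sum.inr (Sum.inl l)) * y l)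
          + (∑ k, a.1 (Sum.inr j) (Sum.inr (Sum.inr k)) * z k)
          + a.2 (Sum.inr j)) = 0 := by
  have h := H (xv y z) (xv_cond y z)
  rw [row0] at h
  simp only [rowj] at h
  simpa [xv] using h

def ind {n : ℕ} (i : Fin n) (t : ℝ) : Fin n → ℝ := fun l => if l = i then t else 0

lemma sum_sq_ind {n : ℕ} (i : Fin n) (t : ℝ) : ∑ j, (ind i t j)^2 = t^2 := by
  simp [ind, apply_ite (·^2), Finset.sum_ite_eq']
lemma sum_mul_ind {n : ℕ} (f : Fin n → ℝ) (i : Fin n) (t : ℝ) :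
    ∑ j, f j * (ind i t j) = f i * t := by
  simp [ind, mul_ite, Finset.sum_ite_eq']
lemma sum_ind_mul {n : ℕ} (f : Fin n → ℝ) (i : Fin n) (t : ℝ) :
    ∑ j, (ind i t j) * f j = t * f i := by
  simp [ind, ite_mul, Finset.sum_ite_eq']
lemma sum_sq_ind2 {n : ℕ} (i j : Fin n) (h : i ≠ j) (s t : ℝ) :
    ∑ l, ((ind i s + ind j t) l)^2 = s^2 + t^2 := by
  simp [ind, add_sq, Finset.sum_add_distrib, apply_ite (·^2),
    Finset.sum_ite_eq', mul_ite, ite_mul, h, h.symm]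
lemma sum_mul_ind2 {n : ℕ} (f : Fin n → ℝ) (i j : Fin n) (s t : ℝ) :
    ∑ l, f l * ((ind i s + ind j t) l) = f i * s + f j * t := by
  simp [ind, mul_add, Finset.sum_add_distrib, mul_ite, Finset.sum_ite_eq']
lemma sum_ind2_mul {n : ℕ} (f : Fin n → ℝ) (i j : Fin n) (s t : ℝ) :
    ∑ l, ((ind i s + ind j t) l) * f l = s * f i + t * f j := by
  simp [ind, add_mul, Finset.sum_add_distrib, ite_mul, Finset.sum_ite_eq']

def Pcond {n m : ℕ} (a : Pr n m) : Prop :=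
  a.2 (Sum.inl ()) = 0 ∧
  (∀ k, a.1 (Sum.inl ()) (Sum.inr (Sum.inr k)) = 0) ∧
  (∀ j, a.1 (Sum.inr j) (Sum.inl ()) = 0) ∧
  (∀ j k, a.1 (Sum.inr j) (Sum.inr (Sum.inr k)) = 0) ∧
  (∀ j, a.1 (Sum.inl ()) (Sum.inr (Sum.inl j)) = 2 * a.2 (Sum.inr j)) ∧
  (∀ j, 2 * a.1 (Sum.inr j) (Sum.inr (Sum.inl j)) = a.1 (Sum.inl ()) (Sum.inl ())) ∧
  (∀ j l, j ≠ l → a.1 (Sum.inr j) (Sum.inr (Sum.inl l)) + a.1 (Sum.inr l) (Sum.inr (Sum.inl j)) = 0)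

lemma forward {n m : ℕ} (a : Pr n m) (H : a ∈ Lset n m) : Pcond a := by
  have h1 : ∀ (i : Fin n) (t : ℝ),
      a.1 (Sum.inl ()) (Sum.inl ()) * t^2 + a.1 (Sum.inl ()) (Sum.inr (Sum.inl i)) * t
      + a.2 (Sum.inl ())
      - 2 * (t * (a.1 (Sum.inr i) (Sum.inl ()) * t^2
          + a.1 (Sum.inr i) (Sum.inr (Sum.inl i)) * t + a.2 (Sum.inr i))) = 0 := by
    intro i t
    have h := key a H (ind i t) 0
    simpa [sum_sq_ind, sum_mul_ind, sum_ind_mul] using h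
  have hv0 : a.2 (Sum.inl ()) = 0 := by
    simpa using key a H 0 0
  have hc : ∀ k, a.1 (Sum.inl ()) (Sum.inr (Sum.inr k)) = 0 := by
    intro k
    have h := key a H 0 (ind k 1)
    simp only [sum_mul_ind] at h
    simpa [hv0] using h
  have halpha : ∀ i, a.1 (Sum.inr i) (Sum.inl ()) = 0 := by
    intro i
    have e1 := h1 i 1; have e2 := h1 i (-1); have e3 := h1 i 2; have e4 := h1 i (-2)
    nlinarith [e1, e2, e3, e4]
  have hb : ∀ i, a.1 (Sum.inl ()) (Sum.inr (Sum.inl i)) = 2 * a.2 (Sum.inr i) := by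
    intro i
    have e1 := h1 i 1; have e2 := h1 i (-1)
    have hα := halpha i
    nlinarith [e1, e2]
  have hB : ∀ i, 2 * a.1 (Sum.inr i) (Sum.inr (Sum.inl i)) = a.1 (Sum.inl ()) (Sum.inl ()) := by
    intro i
    have e1 := h1 i 1; have e2 := h1 i (-1)
    have hα := halpha i
    nlinarith [e1, e2, hv0]
  have hC : ∀ j k, a.1 (Sum.inr j) (Sum.inr (Sum.inr k)) = 0 := by
    intro j k
    have h := key a H (ind j 1) (ind k 1)
    simp only [sum_sq_ind, sum_mul_ind, sum_ind_mul] at h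
    have hα := halpha j; have hbj := hb j; have hBj := hB j; have hck := hc k
    nlinarith [h, hv0]
  have hanti : ∀ j l, j ≠ l →
      a.1 (Sum.inr j) (Sum.inr (Sum.inl l)) + a.1 (Sum.inr l) (Sum.inr (Sum.inl j)) = 0 := by
    intro j l hjl
    have h := key a H (ind j 1 + ind l 1) 0
    rw [sum_sq_ind2 j l hjl] at h
    simp only [sum_mul_ind2, sum_ind2_mul, Pi.zero_apply, mul_zero,
      Finset.sum_const_zero] at h
    have := halpha j; have := halpha l; have := hb j; have := hb l
    have := hB j; have := hB l
    nlinarith [h, hv0]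
  exact ⟨hv0, hc, halpha, hC, hb, hB, hanti⟩

lemma backward {n m : ℕ} (a : Pr n m) (h : Pcond a) : a ∈ Lset n m := by
  obtain ⟨hv0, hc, halpha, hC, hb, hB, hanti⟩ := h
  intro x hx
  have hxe : x = xv (fun j => x (Sum.inr (Sum.inl j))) (fun k => x (Sum.inr (Sum.inr k))) := by
    funext c
    rcases c with u | c
    · cases u; exact hx
    · rcases c with j | k <;> rfl
  set y : Fin n → ℝ := fun j => x (Sum.inr (Sum.inl j)) with hy
  set z : Fin m → ℝ := fun k => x (Sum.inr (Sum.inr k)) with hz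
  rw [hxe, row0]
  simp only [rowj]
  simp only [hv0, hc, halpha, hC, hb, mul_zero, zero_mul, zero_add, add_zero,
    Finset.sum_const_zero, xv, Sum.elim_inl, Sum.elim_inr]
  set A := a.1 (Sum.inl ()) (Sum.inl ()) with hA
  have hBsum : ∀ j l : Fin n, a.1 (Sum.inr j) (Sum.inr (Sum.inl l))
      + a.1 (Sum.inr l) (Sum.inr (Sum.inl j)) = if j = l then A else 0 := by
    intro j l
    by_cases h : j = l
    · subst h; rw [if_pos rfl]; linarith [hB j]
    · rw [if_neg h]; exact hanti j l h
  have hkey : (2:ℝ) * ∑ j, y j * ∑ l, a.1 (Sum.inr j) (Sum.inr (Sum.inl l)) * y l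
      = A * ∑ j, (y j)^2 := by
    have e1 : ∀ j : Fin n, y j * ∑ l, a.1 (Sum.inr j) (Sum.inr (Sum.inl l)) * y l
        = ∑ l, y j * (a.1 (Sum.inr j) (Sum.inr (Sum.inl l)) * y l) := fun j =>
      Finset.mul_sum _ _ _
    simp only [e1]
    rw [two_mul]
    nth_rewrite 2 [Finset.sum_comm]
    rw [← Finset.sum_add_distrib]
    simp only [← Finset.sum_add_distrib]
    have e2 : ∀ j l : Fin n, y j * (a.1 (Sum.inr j) (Sum.inr (Sum.inl l)) * y l)
        + y l * (a.1 (Sum.inr l) (Sum.inr (Sum.inl j)) * y j)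
        = (if j = l then A else 0) * (y j * y l) := by
      intro j l; rw [← hBsum j l]; ring
    simp only [e2]
    simp only [ite_mul, zero_mul, Finset.sum_ite_eq, Finset.mem_univ, if_true]
    rw [Finset.mul_sum]
    exact Finset.sum_congr rfl fun j _ => by ring
  have expand2 : ∑ j, y j * ((∑ l, a.1 (Sum.inr j) (Sum.inr (Sum.inl l)) * y l)
      + a.2 (Sum.inr j)) = (∑ j, y j * ∑ l, a.1 (Sum.inr j) (Sum.inr (Sum.inl l)) * y l)
      + ∑ j, y j * a.2 (Sum.inr j) := by
    simp [mul_add, Finset.sum_add_distrib]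
  rw [expand2]
  have e3 : ∑ j, 2 * a.2 (Sum.inr j) * y j = 2 * ∑ j, y j * a.2 (Sum.inr j) := by
    rw [Finset.mul_sum]; exact Finset.sum_congr rfl fun j _ => by ring
  rw [e3]
  linarith [hkey]

variable {n m : ℕ}

abbrev Idx (n : ℕ) := (Unit ⊕ Fin n) ⊕ {ij : Fin n × Fin n // ij.1 < ij.2}

lemma fst_sum_apply (g : Idx n → ℝ) (r : Unit ⊕ Fin n) (cc : Unit ⊕ (Fin n ⊕ Fin m)) :
    (∑ i, g i • famL n m i).1 r cc = ∑ i, g i * (famL n m i).1 r cc := by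
  rw [Prod.fst_sum]
  simp [Matrix.sum_apply]

lemma snd_sum_apply (g : Idx n → ℝ) (r : Unit ⊕ Fin n) :
    (∑ i, g i • famL n m i).2 r = ∑ i, g i * (famL n m i).2 r := by
  rw [Prod.snd_sum]
  simp

lemma eval00 (g : Idx n → ℝ) :
    (∑ i, g i • famL n m i).1 (Sum.inl ()) (Sum.inl ()) = 4 * g (Sum.inl (Sum.inl ())) := by
  rw [fst_sum_apply, Fintype.sum_sum_type, Fintype.sum_sum_type]
  simp [famL]
  ring

lemma eval_v (g : Idx n → ℝ) (j : Fin n) :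
    (∑ i, g i • famL n m i).2 (Sum.inr j) = g (Sum.inl (Sum.inr j)) := by
  rw [snd_sum_apply, Fintype.sum_sum_type, Fintype.sum_sum_type]
  simp [famL, mul_ite, Finset.sum_ite_eq']

lemma eval_v0 (g : Idx n → ℝ) :
    (∑ i, g i • famL n m i).2 (Sum.inl ()) = 0 := by
  rw [snd_sum_apply, Fintype.sum_sum_type, Fintype.sum_sum_type]
  simp [famL]

lemma eval_b (g : Idx n → ℝ) (j : Fin n) :
    (∑ i, g i • famL n m i).1 (Sum.inl ()) (Sum.inr (Sum.inl j)) =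
      2 * g (Sum.inl (Sum.inr j)) := by
  rw [fst_sum_apply, Fintype.sum_sum_type, Fintype.sum_sum_type]
  simp [famL, mul_ite, Finset.sum_ite_eq']
  ring

lemma eval_c (g : Idx n → ℝ) (k : Fin m) :
    (∑ i, g i • famL n m i).1 (Sum.inl ()) (Sum.inr (Sum.inr k)) = 0 := by
  rw [fst_sum_apply, Fintype.sum_sum_type, Fintype.sum_sum_type]
  simp [famL]

lemma eval_alpha (g : Idx n → ℝ) (j : Fin n) :
    (∑ i, g i • famL n m i).1 (Sum.inr j) (Sum.inl ()) = 0 := by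
  rw [fst_sum_apply, Fintype.sum_sum_type, Fintype.sum_sum_type]
  simp [famL]

lemma eval_C (g : Idx n → ℝ) (j : Fin n) (k : Fin m) :
    (∑ i, g i • famL n m i).1 (Sum.inr j) (Sum.inr (Sum.inr k)) = 0 := by
  rw [fst_sum_apply, Fintype.sum_sum_type, Fintype.sum_sum_type]
  simp [famL]

lemma sub_sum_lt (j l : Fin n) (hjl : j < l) (g' : {ij : Fin n × Fin n // ij.1 < ij.2} → ℝ) :
    ∑ c, g' c * (if j = c.1.1 ∧ l = c.1.2 then (1:ℝ)
      else if j = c.1.2 ∧ l = c.1.1 then -1 else 0) = g' ⟨(j,l), hjl⟩ := by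
  rw [Finset.sum_eq_single (⟨(j,l),hjl⟩ : {ij : Fin n × Fin n // ij.1 < ij.2})]
  · simp
  · rintro ⟨⟨c1,c2⟩,hc⟩ - hne
    have h1 : ¬(j = c1 ∧ l = c2) := by
      rintro ⟨rfl,rfl⟩; exact hne rfl
    have h2 : ¬(j = c2 ∧ l = c1) := by
      rintro ⟨rfl,rfl⟩; exact absurd hc (lt_asymm hjl)
    simp [h1, h2]
  · simp

lemma sub_sum_gt (j l : Fin n) (hjl : l < j) (g' : {ij : Fin n × Fin n // ij.1 < ij.2} → ℝ) :
    ∑ c, g' c * (if j = c.1.1 ∧ l = c.1.2 then (1:ℝ)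
      else if j = c.1.2 ∧ l = c.1.1 then -1 else 0) = -g' ⟨(l,j), hjl⟩ := by
  rw [Finset.sum_eq_single (⟨(l,j),hjl⟩ : {ij : Fin n × Fin n // ij.1 < ij.2})]
  · simp [ne_of_gt hjl]
  · rintro ⟨⟨c1,c2⟩,hc⟩ - hne
    have h1 : ¬(j = c1 ∧ l = c2) := by
      rintro ⟨rfl,rfl⟩; exact absurd hc (lt_asymm hjl)
    have h2 : ¬(j = c2 ∧ l = c1) := by
      rintro ⟨rfl,rfl⟩; exact hne rfl
    simp [h1, h2]
  · simp

lemma sub_sum_eq (j : Fin n) (g' : {ij : Fin n × Fin n // ij.1 < ij.2} → ℝ) :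
    ∑ c, g' c * (if j = c.1.1 ∧ j = c.1.2 then (1:ℝ)
      else if j = c.1.2 ∧ j = c.1.1 then -1 else 0) = 0 := by
  apply Finset.sum_eq_zero
  rintro ⟨⟨c1,c2⟩,hc⟩ -
  have h1 : ¬(j = c1 ∧ j = c2) := by rintro ⟨rfl,rfl⟩; exact absurd hc (lt_irrefl _)
  have h2 : ¬(j = c2 ∧ j = c1) := by rintro ⟨rfl,rfl⟩; exact absurd hc (lt_irrefl _)
  simp [h1, h2]

lemma eval_B (g : Idx n → ℝ) (j l : Fin n) :
    (∑ i, g i • famL n m i).1 (Sum.inr j) (Sum.inr (Sum.inl l)) =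
      (if j = l then 2 * g (Sum.inl (Sum.inl ())) else 0) +
      ∑ c, g (Sum.inr c) * (if j = c.1.1 ∧ l = c.1.2 then (1:ℝ)
        else if j = c.1.2 ∧ l = c.1.1 then -1 else 0) := by
  rw [fst_sum_apply, Fintype.sum_sum_type, Fintype.sum_sum_type]
  have h2 : ∀ k : Fin n, g (Sum.inl (Sum.inr k)) *
      (famL n m (Sum.inl (Sum.inr k))).1 (Sum.inr j) (Sum.inr (Sum.inl l)) = 0 := by
    intro k; simp [famL]
  simp only [h2, Finset.sum_const_zero, add_zero]
  congr 1
  simp only [Finset.univ_unique, Finset.sum_singleton]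
  simp [famL, mul_ite]
  split <;> ring

lemma pcond_famL (i : Idx n) : Pcond (famL n m i) := by
  rcases i with (u | k) | c
  · exact ⟨rfl, fun k => rfl, fun j => rfl, fun j k => rfl, fun j => by simp [famL],
      fun j => by simp [famL]; norm_num, fun j l h => by simp [famL, h, h.symm]⟩
  · refine ⟨?_, ?_, ?_, ?_, ?_, ?_, ?_⟩ <;> intros <;> simp [famL]
  · obtain ⟨⟨c1, c2⟩, hc⟩ := c
    refine ⟨rfl, fun k => rfl, fun j => rfl, fun j k => rfl, fun j => by simp [famL], ?_, ?_⟩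
    · intro j
      have h1 : ¬(j = c1 ∧ j = c2) := by rintro ⟨rfl, rfl⟩; exact absurd hc (lt_irrefl _)
      have h2 : ¬(j = c2 ∧ j = c1) := by rintro ⟨rfl, rfl⟩; exact absurd hc (lt_irrefl _)
      simp [famL, h1, h2]
    · intro j l hjl
      simp only [famL, Matrix.of_apply]
      by_cases h1 : j = c1 ∧ l = c2
      · obtain ⟨rfl, rfl⟩ := h1
        have h2 : ¬(l = j ∧ j = l) := by rintro ⟨rfl, -⟩; exact hjl rfl
        simp [hjl, h2, ne_of_gt hc, hjl.symm]
      · by_cases h2 : j = c2 ∧ l = c1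
        · obtain ⟨rfl, rfl⟩ := h2
          have h3 : ¬(l = j ∧ j = l) := by rintro ⟨rfl, -⟩; exact hjl rfl
          simp [h3, hjl.symm, ne_of_gt hc]
        · have h3 : ¬(l = c1 ∧ j = c2) := by
            rintro ⟨rfl, rfl⟩; exact h2 ⟨rfl, rfl⟩
          have h4 : ¬(l = c2 ∧ j = c1) := by
            rintro ⟨rfl, rfl⟩; exact h1 ⟨rfl, rfl⟩
          simp [h1, h2, h3, h4]

def Lsub (n m : ℕ) : Submodule ℝ (Pr n m) where
  carrier := Lset n m
  zero_mem' := by intro x hx; simp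
  add_mem' := by
    intro a b ha hb x hx
    have e : ∀ i, ((a + b).1.mulVec x + (a + b).2) i =
        (a.1.mulVec x + a.2) i + (b.1.mulVec x + b.2) i := by
      intro i
      simp [Matrix.add_mulVec]
      ring
    simp only [e, mul_add, Finset.sum_add_distrib]
    have h1 := ha x hx
    have h2 := hb x hx
    linarith
  smul_mem' := by
    intro c a ha x hx
    have e : ∀ i, ((c • a).1.mulVec x + (c • a).2) i = c * ((a.1.mulVec x + a.2) i) := by
      intro i
      simp [Matrix.smul_mulVec]
      ring
    simp only [e]
    have h1 : ∑ j, x (Sum.inr (Sum.inl j)) * (c * (a.1.mulVec x + a.2) (Sum.inr j)) =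
        c * ∑ j, x (Sum.inr (Sum.inl j)) * (a.1.mulVec x + a.2) (Sum.inr j) := by
      rw [Finset.mul_sum]; exact Finset.sum_congr rfl fun j _ => by ring
    rw [h1]
    have h2 := ha x hx
    linear_combination c * h2

lemma mem_span_of_pcond (a : Pr n m) (h : Pcond a) :
    a ∈ Submodule.span ℝ (Set.range (famL n m)) := by
  obtain ⟨hv0, hc, halpha, hC, hb, hB, hanti⟩ := h
  set g : Idx n → ℝ := Sum.elim
    (Sum.elim (fun _ => a.1 (Sum.inl ()) (Sum.inl ()) / 4) (fun k => a.2 (Sum.inr k)))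
    (fun c => a.1 (Sum.inr c.1.1) (Sum.inr (Sum.inl c.1.2))) with hg
  have hsum : ∑ i, g i • famL n m i = a := by
    refine Prod.ext ?_ ?_
    · ext r cc
      rcases r with u | j
      · cases u
        rcases cc with u' | c
        · cases u'
          rw [eval00]
          simp [hg]
          ring
        · rcases c with j | k
          · rw [eval_b]
            simp only [hg, Sum.elim_inl, Sum.elim_inr]
            rw [hb j]
          · rw [eval_c, hc k]
      · rcases cc with u' | c
        · cases u'
          rw [eval_alpha, halpha j]
        · rcases c with l | k
          · rw [eval_B]
            rcases lt_trichotomy j l with hlt | heq | hgt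
            · rw [if_neg (ne_of_lt hlt), sub_sum_lt j l hlt]
              simp [hg]
            · subst heq
              rw [if_pos rfl, sub_sum_eq]
              have := hB j
              simp only [hg, Sum.elim_inl, Sum.elim_inl]
              simp
              linarith
            · rw [if_neg (ne_of_gt hgt), sub_sum_gt j l hgt]
              have := hanti l j (ne_of_lt hgt)
              simp only [hg, Sum.elim_inr]
              simp
              linarith
          · rw [eval_C, hC j k]
    · funext r
      rcases r with u | j
      · cases u
        rw [eval_v0, hv0]
      · rw [eval_v]
        simp [hg]
  rw [← hsum]
  exact Submodule.sum_smul_mem _ _ fun i _ => Submodule.subset_span (Set.mem_range_self i)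

lemma indep_famL : LinearIndependent ℝ (famL n m) := by
  rw [Fintype.linearIndependent_iff]
  intro g hg i
  rcases i with (u | k) | c
  · cases u
    have h := eval00 (m := m) g
    rw [hg] at h
    simp at h
    linarith
  · have h := eval_v (m := m) g k
    rw [hg] at h
    simpa using h.symm
  · have h := eval_B (m := m) g c.1.1 c.1.2
    rw [hg, if_neg (ne_of_lt c.2), sub_sum_lt c.1.1 c.1.2 c.2] at h
    simpa using h.symm

lemma card_lt_pairs : Fintype.card {ij : Fin n × Fin n // ij.1 < ij.2} = n * (n - 1) / 2 := by
  have e : {ij : Fin n × Fin n // ij.1 < ij.2} ≃ Σ j : Fin n, Fin j.val :=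
    { toFun := fun p => ⟨p.1.2, ⟨p.1.1.val, p.2⟩⟩
      invFun := fun q => ⟨(⟨q.2.val, q.2.isLt.trans q.1.isLt⟩, q.1), q.2.isLt⟩
      left_inv := fun p => rfl
      right_inv := fun q => rfl }
  rw [Fintype.card_congr e, Fintype.card_sigma]
  simp only [Fintype.card_fin]
  rw [show (∑ x : Fin n, (x : ℕ)) = ∑ i ∈ Finset.range n, i from
    Fin.sum_univ_eq_sum_range (fun i => i) n]
  exact Finset.sum_range_id n

/-- The family `famL` is linearly independent and spans `L`; in particular `L` is a
linear space of dimension `q + (q-1)(q-2)/2 = (n+1) + n(n-1)/2`. -/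
theorem stmt9 (n m : ℕ) (hn : 1 ≤ n) :
    LinearIndependent ℝ (famL n m) ∧
    (Submodule.span ℝ (Set.range (famL n m)) : Set _) = Lset n m ∧
    Nat.card ((Unit ⊕ Fin n) ⊕ {ij : Fin n × Fin n // ij.1 < ij.2}) =
      (n + 1) + n * (n - 1) / 2 := by
  refine ⟨indep_famL, ?_, ?_⟩
  · apply Set.Subset.antisymm
    · have hle : Submodule.span ℝ (Set.range (famL n m)) ≤ Lsub n m := by
        rw [Submodule.span_le]
        rintro _ ⟨i, rfl⟩
        exact backward _ (pcond_famL i)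
      exact fun a ha => hle ha
    · intro a ha
      exact mem_span_of_pcond a (forward a ha)
  · rw [Nat.card_eq_fintype_card]
    simp [card_lt_pairs]
    omega
end

section
/- Let Φ : ℝ^p → ℝ be C², let μ : ℝ^p → ℝ^p and σ-derived θ = σσᵀ be affine with θ(x) = A^0 + Σ_i A^i x_i, and suppose ∇Φ(x)θ(x) = Φ(x)vᵀ for a constant vector v ∈ ℝ^p and all x. Then tr(∇²Φ(x) θ(x)) − Φ(x)^{-1} ∇Φ(x) θ(x) (∇Φ(x))ᵀ = −∇Φ(x) Σ_{i=1}^p (A^i)^i for all x with Φ(x) ≠ 0, where (A^i)^i denotes the i-th column of A^i. -/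
/-!
Differentiating the `j`-th entry of `∇Φ θ = Φ vᵀ` along `e_j`, where `θ` moves by `t • Aʲ`,
gives `∑ₖ ∂ⱼ∂ₖΦ θₖⱼ + ∑ₖ ∂ₖΦ (Aʲ)ₖⱼ = vⱼ ∂ⱼΦ`. Summing over `j` turns the left side into
`tr(∇²Φ θ) + ∇Φ ∑ⱼ (Aʲ)ʲ`, and the right side is `∇Φ v = Φ⁻¹ ∇Φ θ ∇Φᵀ` by the hypothesis again.
-/

open Matrix

section CoordinateCalculus

variable {ι : Type*} [Fintype ι] [DecidableEq ι]

noncomputable def coordGrad (f : (ι → ℝ) → ℝ) (x : ι → ℝ) : ι → ℝ :=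
  fun i => fderiv ℝ f x (Pi.single i 1)

noncomputable def coordHessian (f : (ι → ℝ) → ℝ) (x : ι → ℝ) : Matrix ι ι ℝ :=
  of fun i j => fderiv ℝ (fderiv ℝ f) x (Pi.single i 1) (Pi.single j 1)

theorem coordHessian_eq_iteratedFDeriv (f : (ι → ℝ) → ℝ) (x : ι → ℝ) :
    coordHessian f x = of fun i j => iteratedFDeriv ℝ 2 f x ![Pi.single i 1, Pi.single j 1] := by
  ext i j
  simp [coordHessian, iteratedFDeriv_two_apply]

theorem apply_add_smul_single_of_affine {A0 : Matrix ι ι ℝ} {A : ι → Matrix ι ι ℝ}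
    {θ : (ι → ℝ) → Matrix ι ι ℝ} (hθ : ∀ x, θ x = A0 + ∑ i, x i • A i)
    (x : ι → ℝ) (j : ι) (t : ℝ) :
    θ (x + t • Pi.single j 1) = θ x + t • A j := by
  simp only [hθ, Pi.add_apply, Pi.smul_apply, add_smul, Finset.sum_add_distrib, smul_eq_mul,
    Pi.single_apply, mul_ite, mul_one, mul_zero, ite_smul, zero_smul, Finset.sum_ite_eq',
    Finset.mem_univ, if_true]
  abel

theorem hasLineDerivAt_fderiv_apply {E : Type*} [NormedAddCommGroup E] [NormedSpace ℝ E]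
    {f : E → ℝ} {x : E} (hf : DifferentiableAt ℝ (fderiv ℝ f) x) (u w : E) :
    HasLineDerivAt ℝ (fun y => fderiv ℝ f y w) (fderiv ℝ (fderiv ℝ f) x u w) x u :=
  ((ContinuousLinearMap.apply ℝ ℝ w).hasFDerivAt.comp x hf.hasFDerivAt).hasLineDerivAt u

variable {A0 : Matrix ι ι ℝ} {A : ι → Matrix ι ι ℝ} {θ : (ι → ℝ) → Matrix ι ι ℝ}
  {f : (ι → ℝ) → ℝ} {v : ι → ℝ} {x : ι → ℝ}

theorem sum_coordHessian_mul_add_coordGrad_mul (hθ : ∀ x, θ x = A0 + ∑ i, x i • A i)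
    (hgrad : ∀ y, vecMul (coordGrad f y) (θ y) = f y • v)
    (hf : DifferentiableAt ℝ f x) (hf' : DifferentiableAt ℝ (fderiv ℝ f) x) (j : ι) :
    ∑ k, (coordHessian f x j k * θ x k j + coordGrad f x k * A j k j) =
      v j * coordGrad f x j := by
  have hlhs : HasLineDerivAt ℝ (fun y => vecMul (coordGrad f y) (θ y) j)
      (∑ k, (coordHessian f x j k * θ x k j + coordGrad f x k * A j k j)) x (Pi.single j 1) := by
    unfold HasLineDerivAt
    simp only [vecMul, dotProduct, apply_add_smul_single_of_affine hθ, Matrix.add_apply,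
      Matrix.smul_apply, smul_eq_mul]
    refine HasDerivAt.fun_sum fun k _ => ?_
    have hθline : HasDerivAt (fun t : ℝ => θ x k j + t * A j k j) (A j k j) 0 := by
      simpa using ((hasDerivAt_id (0 : ℝ)).mul_const (A j k j)).const_add (θ x k j)
    exact (hasLineDerivAt_fderiv_apply hf' (Pi.single j 1) (Pi.single k 1)).fun_mul hθline
      |>.congr_deriv (by simp [coordHessian, coordGrad])
  have hrhs : HasLineDerivAt ℝ (fun y => f y * v j) (v j * coordGrad f x j) x (Pi.single j 1) :=
    (hf.hasFDerivAt.hasLineDerivAt (Pi.single j 1)).mul_const (v j) |>.congr_deriv (mul_comm _ _)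
  simp only [hgrad] at hlhs
  exact hlhs.unique hrhs

theorem trace_coordHessian_mul_add_coordGrad_dotProduct (hθ : ∀ x, θ x = A0 + ∑ i, x i • A i)
    (hgrad : ∀ y, vecMul (coordGrad f y) (θ y) = f y • v)
    (hf : DifferentiableAt ℝ f x) (hf' : DifferentiableAt ℝ (fderiv ℝ f) x) :
    trace (coordHessian f x * θ x) + coordGrad f x ⬝ᵥ ∑ i, (fun r => A i r i) =
      v ⬝ᵥ coordGrad f x := by
  have h := Finset.sum_congr rfl fun j (_ : j ∈ Finset.univ) =>
    sum_coordHessian_mul_add_coordGrad_mul hθ hgrad hf hf' j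
  simp only [Finset.sum_add_distrib] at h
  rw [trace, dotProduct, dotProduct, ← h]
  simp only [diag_apply, mul_apply, Finset.sum_apply, Finset.mul_sum]
  rw [Finset.sum_comm (f := fun k j => coordGrad f x k * A j k j)]

theorem coordGrad_dotProduct_mulVec (hgrad : ∀ y, vecMul (coordGrad f y) (θ y) = f y • v) :
    coordGrad f x ⬝ᵥ θ x *ᵥ coordGrad f x = f x * (v ⬝ᵥ coordGrad f x) := by
  rw [dotProduct_mulVec, hgrad, smul_dotProduct, smul_eq_mul]

end CoordinateCalculus

/-- Let `Φ` be `C²`, let `θ(x) = A⁰ + ∑ᵢ Aⁱ xᵢ` be an affine matrix function, and suppose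
`∇Φ(x) θ(x) = Φ(x) vᵀ` for a constant vector `v` and all `x`. Then for all `x` with
`Φ(x) ≠ 0`,
`tr(∇²Φ(x) θ(x)) - Φ(x)⁻¹ ∇Φ(x) θ(x) (∇Φ(x))ᵀ = -∇Φ(x) ∑ᵢ (Aⁱ)ⁱ`,
where `(Aⁱ)ⁱ` is the `i`-th column of `Aⁱ`. -/
theorem stmt16 (p : ℕ) (Φ : (Fin p → ℝ) → ℝ) (hΦ : ContDiff ℝ 2 Φ)
    (A0 : Matrix (Fin p) (Fin p) ℝ) (A : Fin p → Matrix (Fin p) (Fin p) ℝ)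
    (θ : (Fin p → ℝ) → Matrix (Fin p) (Fin p) ℝ)
    (hθ : ∀ x, θ x = A0 + ∑ i, x i • A i)
    (v : Fin p → ℝ)
    (hgrad : ∀ x, Matrix.vecMul (fun i => fderiv ℝ Φ x (Pi.single i 1)) (θ x) =
      fun i => Φ x * v i) :
    ∀ x, Φ x ≠ 0 →
      Matrix.trace
          ((Matrix.of fun i j =>
            iteratedFDeriv ℝ 2 Φ x ![Pi.single i 1, Pi.single j 1]) * θ x) -
        (Φ x)⁻¹ * ((fun i => fderiv ℝ Φ x (Pi.single i 1)) ⬝ᵥ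
          (θ x).mulVec (fun i => fderiv ℝ Φ x (Pi.single i 1))) =
      -((fun i => fderiv ℝ Φ x (Pi.single i 1)) ⬝ᵥ ∑ i, (fun r => A i r i)) := by
  intro x hx
  have hgrad' : ∀ y, vecMul (coordGrad Φ y) (θ y) = Φ y • v := hgrad
  have hf : DifferentiableAt ℝ Φ x := (hΦ.differentiable (by norm_num)) x
  have hf' : DifferentiableAt ℝ (fderiv ℝ Φ) x :=
    (hΦ.fderiv_right (m := 1) (by norm_num)).differentiable (by norm_num) x
  have key := trace_coordHessian_mul_add_coordGrad_dotProduct hθ hgrad' hf hf'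
  rw [← coordHessian_eq_iteratedFDeriv]
  change _ - (Φ x)⁻¹ * (coordGrad Φ x ⬝ᵥ θ x *ᵥ coordGrad Φ x) = -(coordGrad Φ x ⬝ᵥ _)
  rw [coordGrad_dotProduct_mulVec hgrad', inv_mul_cancel_left₀ hx]
  linarith
end

section
/- Let X = ∩_{i=1}^q {u_i ≥ 0} ⊂ ℝ^p be a nonempty polyhedron contained in a polyhedron C = ∩_{i=1}^r {v_i ≥ 0} on which the affine symmetric-matrix-valued function θ admits a representation θ(x) = B^0 + Σ_{i=1}^r B^i v_i(x) with all B^i positive semi-definite. Then θ also admits a representation θ(x) = C^0 + Σ_{i=1}^q C^i u_i(x) with all C^i positive semi-definite. -/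
/-!
Each `vᵢ` is nonnegative on the nonempty polyhedron `X`, so by the affine Farkas lemma
`vᵢ = ∑ⱼ λᵢⱼ uⱼ + cᵢ` with `λᵢⱼ, cᵢ ≥ 0`; substituting into `θ` gives the positive semidefinite
coefficients `Cʲ = ∑ᵢ λᵢⱼ Bⁱ` and `C⁰ = B⁰ + ∑ᵢ cᵢ Bⁱ`.

The affine Farkas lemma reduces to the conic one by homogenizing `x ↦ a ⬝ᵥ x + b` to
`(y, t) ↦ a ⬝ᵥ y + b t`. The conic Farkas lemma is Hahn–Banach separation from the cone generated
by finitely many vectors, once that cone is known to be closed: by Carathéodory's theorem for cones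
it is a finite union of images of orthants under injective linear maps.
-/

open Matrix

section ConicalCombination

variable {E ι : Type*} [AddCommGroup E] [Module ℝ E]

lemma exists_erase_nonneg_sum_smul_eq [DecidableEq ι] (v : ι → E) {s : Finset ι} {c g : ι → ℝ}
    (hc : ∀ i ∈ s, 0 ≤ c i) (hg : ∑ i ∈ s, g i • v i = 0) (hpos : ∃ i ∈ s, 0 < g i) :
    ∃ j ∈ s, ∃ c' : ι → ℝ, (∀ i ∈ s.erase j, 0 ≤ c' i) ∧
      ∑ i ∈ s.erase j, c' i • v i = ∑ i ∈ s, c i • v i := by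
  obtain ⟨j, hj, hjmin⟩ := (s.filter (0 < g ·)).exists_min_image (fun i => c i / g i)
    (let ⟨i, hi, hgi⟩ := hpos; ⟨i, Finset.mem_filter.2 ⟨hi, hgi⟩⟩)
  rw [Finset.mem_filter] at hj
  -- `τ` is the largest step along `-g` keeping every coefficient nonnegative; it kills `c j`.
  set τ := c j / g j
  have hτ : 0 ≤ τ := div_nonneg (hc j hj.1) hj.2.le
  refine ⟨j, hj.1, fun i => c i - τ * g i, fun i hi => ?_, ?_⟩
  · have hi := Finset.mem_of_mem_erase hi
    rcases le_or_gt (g i) 0 with hgi | hgi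
    · nlinarith [hc i hi]
    · have := hjmin i (Finset.mem_filter.2 ⟨hi, hgi⟩)
      rw [le_div_iff₀ hgi] at this
      linarith
  · rw [Finset.sum_erase _ (by simp [τ, div_mul_cancel₀ _ hj.2.ne'])]
    simp only [sub_smul, mul_smul, Finset.sum_sub_distrib, ← Finset.smul_sum, hg, smul_zero,
      sub_zero]

theorem exists_linearIndepOn_nonneg_sum_smul_eq (v : ι → E) (s : Finset ι) (c : ι → ℝ)
    (hc : ∀ i ∈ s, 0 ≤ c i) :
    ∃ t ⊆ s, LinearIndepOn ℝ v (t : Set ι) ∧ ∃ g : ι → ℝ, (∀ i ∈ t, 0 ≤ g i) ∧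
      ∑ i ∈ t, g i • v i = ∑ i ∈ s, c i • v i := by
  classical
  induction s using Finset.strongInduction generalizing c with
  | H s ih =>
  by_cases hs : LinearIndepOn ℝ v (s : Set ι)
  · exact ⟨s, subset_rfl, hs, c, hc, rfl⟩
  obtain ⟨g, hg, hpos⟩ : ∃ g : ι → ℝ, ∑ i ∈ s, g i • v i = 0 ∧ ∃ i ∈ s, 0 < g i := by
    obtain ⟨g, hg, i, hi, hgi⟩ := not_linearIndepOn_finset_iff.1 hs
    rcases hgi.lt_or_gt with hneg | hpos
    · exact ⟨-g, by simp [neg_smul, hg], i, hi, neg_pos.2 hneg⟩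
    · exact ⟨g, hg, i, hi, hpos⟩
  obtain ⟨j, hj, c', hc', hsum⟩ := exists_erase_nonneg_sum_smul_eq v hc hg hpos
  obtain ⟨t, hts, ht, g', hg', hsum'⟩ := ih _ (Finset.erase_ssubset hj) c' hc'
  exact ⟨t, hts.trans (s.erase_subset j), ht, g', hg', hsum'.trans hsum⟩

variable [TopologicalSpace E] [IsTopologicalAddGroup E] [ContinuousSMul ℝ E] [T2Space E]

lemma LinearIndependent.isClosed_image_nonneg_fintypeLinearCombination {κ : Type*} [Fintype κ]
    {w : κ → E} (hw : LinearIndependent ℝ w) :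
    IsClosed (Fintype.linearCombination ℝ w '' Set.Ici 0) :=
  (LinearMap.isClosedEmbedding_of_injective
    (LinearMap.ker_eq_bot.2 hw.fintypeLinearCombination_injective)).isClosedMap _ isClosed_Ici

theorem isClosed_image_nonneg_fintypeLinearCombination [Fintype ι] (v : ι → E) :
    IsClosed (Fintype.linearCombination ℝ v '' Set.Ici 0) := by
  classical
  have hdecomp : Fintype.linearCombination ℝ v '' Set.Ici 0 =
      ⋃ t ∈ {t : Finset ι | LinearIndepOn ℝ v (t : Set ι)},
        Fintype.linearCombination ℝ (fun i : t => v i) '' Set.Ici 0 := by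
    ext x
    simp only [Set.mem_image, Set.mem_Ici, Set.mem_iUnion, Set.mem_ofPred_eq,
      Fintype.linearCombination_apply, exists_prop]
    constructor
    · rintro ⟨c, hc, rfl⟩
      obtain ⟨t, -, ht, g, hg, hsum⟩ :=
        exists_linearIndepOn_nonneg_sum_smul_eq v Finset.univ c fun i _ => hc i
      exact ⟨t, ht, fun i => g i, fun i => hg i i.2, (Finset.sum_coe_sort t _).trans hsum⟩
    · rintro ⟨t, -, g, hg, rfl⟩
      refine ⟨fun i => if h : i ∈ t then g ⟨i, h⟩ else 0, fun i => ?_, ?_⟩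
      · dsimp only
        split_ifs with h
        exacts [hg ⟨i, h⟩, le_rfl]
      · rw [← Finset.sum_subset t.subset_univ fun i _ hi => by simp [hi],
          ← Finset.sum_coe_sort t]
        simp
  rw [hdecomp]
  exact Set.Finite.isClosed_biUnion (Set.toFinite _) fun t ht =>
    LinearIndependent.isClosed_image_nonneg_fintypeLinearCombination ht

theorem exists_nonneg_sum_smul_eq_of_forall_strongDual [LocallyConvexSpace ℝ E] [Fintype ι]
    (v : ι → E) (b : E) (h : ∀ f : StrongDual ℝ E, (∀ i, 0 ≤ f (v i)) → 0 ≤ f b) :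
    ∃ c : ι → ℝ, 0 ≤ c ∧ ∑ i, c i • v i = b := by
  classical
  let K : ProperCone ℝ E :=
    ⟨(PointedCone.positive ℝ (ι → ℝ)).map (Fintype.linearCombination ℝ v),
      isClosed_image_nonneg_fintypeLinearCombination v⟩
  by_contra hb
  obtain ⟨f, hfK, hfb⟩ :=
    K.hyperplane_separation_point (x₀ := b) fun ⟨c, hc, hcb⟩ => hb ⟨c, hc, hcb⟩
  refine hfb.not_ge (h f fun i => hfK _ ⟨Pi.single i 1, ?_, ?_⟩)
  · exact Pi.single_nonneg.2 zero_le_one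
  · simp

end ConicalCombination

section AffineFarkas

open Filter Topology

variable {n ι : Type*} [Fintype n] [Fintype ι]

lemma StrongDual.exists_prod_apply_eq_dotProduct_add (f : StrongDual ℝ ((n → ℝ) × ℝ)) :
    ∃ (y : n → ℝ) (t : ℝ), ∀ h e, f (h, e) = h ⬝ᵥ y + e * t := by
  classical
  refine ⟨fun k => f (Pi.single k 1, 0), f (0, 1), fun h e => ?_⟩
  have hsplit : (h, e) = ∑ k, h k • ((Pi.single k 1 : n → ℝ), (0 : ℝ)) + e • (0, 1) := by
    ext k <;> simp [Prod.fst_sum, Prod.snd_sum, Finset.sum_apply, Pi.single_apply]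
  simp only [hsplit, map_add, map_sum, map_smul, smul_eq_mul, dotProduct]

variable (γ : ι → n → ℝ) (δ : ι → ℝ) (g : n → ℝ) (d : ℝ)

omit [Fintype ι] in
lemma dotProduct_add_mul_nonneg_of_nonneg_on_polyhedron
    (hne : ∃ x, ∀ i, 0 ≤ γ i ⬝ᵥ x + δ i)
    (hnonneg : ∀ x, (∀ i, 0 ≤ γ i ⬝ᵥ x + δ i) → 0 ≤ g ⬝ᵥ x + d)
    {y : n → ℝ} {t : ℝ} (ht : 0 ≤ t) (hy : ∀ i, 0 ≤ γ i ⬝ᵥ y + δ i * t) :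
    0 ≤ g ⬝ᵥ y + d * t := by
  obtain ⟨x₀, hx₀⟩ := hne
  -- For `s > 0` the point `(t + s)⁻¹ • (y + s • x₀)` lies in the polyhedron; then let `s → 0⁺`.
  have hval : ∀ (a : n → ℝ) (b : ℝ) {s : ℝ}, 0 < s →
      a ⬝ᵥ ((t + s)⁻¹ • (y + s • x₀)) + b = (t + s)⁻¹ * ((a ⬝ᵥ y + b * t) + s * (a ⬝ᵥ x₀ + b)) := by
    intro a b s hs
    rw [dotProduct_smul, dotProduct_add, dotProduct_smul, smul_eq_mul, smul_eq_mul]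
    field_simp
    ring
  have hshift : ∀ s : ℝ, 0 < s → 0 ≤ (g ⬝ᵥ y + d * t) + s * (g ⬝ᵥ x₀ + d) := by
    intro s hs
    have hmem : ∀ i, 0 ≤ γ i ⬝ᵥ ((t + s)⁻¹ • (y + s • x₀)) + δ i := fun i => by
      rw [hval _ _ hs]
      have := hx₀ i
      have := hy i
      positivity
    have := hnonneg _ hmem
    rw [hval _ _ hs] at this
    exact nonneg_of_mul_nonneg_right (by rwa [mul_comm] at this) (by positivity)
  have hlim : Tendsto (fun s : ℝ => (g ⬝ᵥ y + d * t) + s * (g ⬝ᵥ x₀ + d)) (𝓝[>] 0)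
      (𝓝 (g ⬝ᵥ y + d * t)) := by
    refine (Continuous.tendsto' ?_ 0 _ (by simp)).mono_left nhdsWithin_le_nhds
    fun_prop
  exact ge_of_tendsto hlim (eventually_nhdsWithin_of_forall hshift)

theorem exists_nonneg_affine_combination_of_nonneg_on_polyhedron
    (hne : ∃ x, ∀ i, 0 ≤ γ i ⬝ᵥ x + δ i)
    (hnonneg : ∀ x, (∀ i, 0 ≤ γ i ⬝ᵥ x + δ i) → 0 ≤ g ⬝ᵥ x + d) :
    ∃ (w : ι → ℝ) (c : ℝ), 0 ≤ w ∧ 0 ≤ c ∧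
      ∀ x, g ⬝ᵥ x + d = ∑ i, w i * (γ i ⬝ᵥ x + δ i) + c := by
  -- `(a, b)` encodes `x ↦ a ⬝ᵥ x + b`; the index `none` is the constant function `1`.
  let v : Option ι → (n → ℝ) × ℝ := fun o => o.elim (0, 1) fun i => (γ i, δ i)
  obtain ⟨c, hc, hsum⟩ := exists_nonneg_sum_smul_eq_of_forall_strongDual v (g, d) fun f hf => by
    obtain ⟨y, t, hf_apply⟩ := f.exists_prod_apply_eq_dotProduct_add
    have ht := hf none
    have hy := fun i => hf (some i)
    simp only [v, Option.elim, hf_apply, zero_dotProduct, one_mul, zero_add] at ht hy ⊢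
    exact dotProduct_add_mul_nonneg_of_nonneg_on_polyhedron γ δ g d hne hnonneg ht hy
  rw [Fintype.sum_option] at hsum
  obtain ⟨hg, hd⟩ := Prod.ext_iff.1 hsum
  simp only [v, Option.elim, Prod.fst_add, Prod.snd_add, Prod.fst_sum, Prod.snd_sum,
    Prod.smul_fst, Prod.smul_snd] at hg hd
  refine ⟨fun i => c (some i), c none, fun i => hc _, hc _, fun x => ?_⟩
  simp only [← hg, ← hd, smul_zero, zero_add, sum_dotProduct, smul_dotProduct, smul_eq_mul,
    mul_one, mul_add, Finset.sum_add_distrib]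
  ring

end AffineFarkas

lemma sum_smul_eq_of_eq_sum_mul_add {R M ι κ : Type*} [CommSemiring R] [AddCommMonoid M]
    [Module R M] [Fintype ι] [Fintype κ] (B : κ → M) {v : κ → R} {u : ι → R} {w : κ → ι → R}
    {c : κ → R} (h : ∀ k, v k = ∑ i, w k i * u i + c k) :
    ∑ k, v k • B k = ∑ i, u i • ∑ k, w k i • B k + ∑ k, c k • B k := by
  simp only [h, add_smul, Finset.sum_add_distrib, Finset.sum_smul, Finset.smul_sum, smul_smul]
  rw [Finset.sum_comm]
  simp only [mul_comm]

/-- If the nonempty polyhedron `X = ∩ᵢ {uᵢ ≥ 0}` is contained in the polyhedron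
`C = ∩ᵢ {vᵢ ≥ 0}` and `θ(x) = B⁰ + ∑ᵢ Bⁱ vᵢ(x)` with all `Bⁱ` positive semi-definite,
then `θ(x) = C⁰ + ∑ᵢ Cⁱ uᵢ(x)` for some positive semi-definite `Cⁱ`. -/
theorem stmt18 (p q r : ℕ)
    (γ : Fin q → Fin p → ℝ) (δ : Fin q → ℝ)
    (γv : Fin r → Fin p → ℝ) (δv : Fin r → ℝ)
    (hne : ∃ x : Fin p → ℝ, ∀ i, 0 ≤ γ i ⬝ᵥ x + δ i)
    (hsub : ∀ x : Fin p → ℝ, (∀ i, 0 ≤ γ i ⬝ᵥ x + δ i) → ∀ i, 0 ≤ γv i ⬝ᵥ x + δv i)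
    (θ : (Fin p → ℝ) → Matrix (Fin p) (Fin p) ℝ)
    (B0 : Matrix (Fin p) (Fin p) ℝ) (B : Fin r → Matrix (Fin p) (Fin p) ℝ)
    (hB0 : B0.PosSemidef) (hB : ∀ i, (B i).PosSemidef)
    (hθ : ∀ x, θ x = B0 + ∑ i, (γv i ⬝ᵥ x + δv i) • B i) :
    ∃ (C0 : Matrix (Fin p) (Fin p) ℝ) (C : Fin q → Matrix (Fin p) (Fin p) ℝ),
      C0.PosSemidef ∧ (∀ i, (C i).PosSemidef) ∧
      ∀ x, θ x = C0 + ∑ i, (γ i ⬝ᵥ x + δ i) • C i := by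
  choose w c hw hc hv using fun k =>
    exists_nonneg_affine_combination_of_nonneg_on_polyhedron γ δ (γv k) (δv k) hne
      fun x hx => hsub x hx k
  refine ⟨B0 + ∑ k, c k • B k, fun i => ∑ k, w k i • B k,
    hB0.add (posSemidef_sum _ fun k _ => (hB k).smul (hc k)),
    fun i => posSemidef_sum _ fun k _ => (hB k).smul (hw k i), fun x => ?_⟩
  rw [hθ x, sum_smul_eq_of_eq_sum_mul_add B fun k => hv k x]
  abel
end
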